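/- Let 𝒳 be any family of ordered pairs (X,Y) with X ⊆ 𝔹 linearly independent and Y suitable for X. If an 𝒳-adequate subset of 𝔹 is partitioned into two cells, then one of the cells must be 𝒳-adequate. -/

import Mathlib

open scoped BigOperators

attribute [local instance] Classical.propDecidable

/-- The countable Boolean group, realized as `ℕ →₀ ZMod 2` (equivalently, finite subsets
of ℕ under symmetric difference), a vector space over `𝔽₂ = ZMod 2`. -/
abbrev BoolGrp : Type := ℕ →₀ ZMod 2

/-- The set of finite sums (symmetric differences) of nonempty finite subsets of `X`. -/
def FSset (X : Set BoolGrp) : Set BoolGrp :=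
  {g | ∃ S : Finset BoolGrp, S.Nonempty ∧ ↑S ⊆ X ∧ g = ∑ v ∈ S, v}

/-- The `X`-support of `y`: for linearly independent `X` and `y` in the span of `X`,
the unique finite `S ⊆ X` with `y = ∑_{v ∈ S} v` (junk value `∅` otherwise). -/
noncomputable def Xsupp (X : Set BoolGrp) (y : BoolGrp) : Finset BoolGrp :=
  if h : ∃ S : Finset BoolGrp, ↑S ⊆ X ∧ y = ∑ v ∈ S, v then h.choose else ∅

/-- The `X`-support of a set `Y`: the union of the `X`-supports of its elements. -/
noncomputable def XsuppSet (X Y : Set BoolGrp) : Set BoolGrp :=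
  ⋃ y ∈ Y, (Xsupp X y : Set BoolGrp)

/-- An `m`-witness for the suitability of `Y` for `X`: an `m`-sequence of elements of
`Y` whose `X`-supports pairwise intersect. -/
def SuitWitness (X Y : Set BoolGrp) {m : ℕ} (y : Fin m → BoolGrp) : Prop :=
  (∀ i, y i ∈ Y) ∧ ∀ i j : Fin m, i < j →
    ((Xsupp X (y i) : Set BoolGrp) ∩ (Xsupp X (y j) : Set BoolGrp)).Nonempty

/-- `Y ⊆ FS(X)` is suitable for (linearly independent) `X` if (i) for each `m` there is
an `m`-witness for suitability, and (ii) whenever the `X`-supports of `y, y' ∈ Y` (not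
necessarily distinct) intersect, the intersection is not covered by the `X`-support of
`Y \ {y, y'}`. -/
def Suitable (X Y : Set BoolGrp) : Prop :=
  Y ⊆ FSset X ∧
  (∀ m : ℕ, ∃ y : Fin m → BoolGrp, SuitWitness X Y y) ∧
  ∀ y ∈ Y, ∀ y' ∈ Y,
    ((Xsupp X y : Set BoolGrp) ∩ (Xsupp X y' : Set BoolGrp)).Nonempty →
    (((Xsupp X y : Set BoolGrp) ∩ (Xsupp X y' : Set BoolGrp)) \
      XsuppSet X (Y \ {y, y'})).Nonempty

/-- The set of finite sums of a finite sequence `a : Fin m → BoolGrp`. -/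
def FSfin {m : ℕ} (a : Fin m → BoolGrp) : Set BoolGrp :=
  {g | ∃ s : Finset (Fin m), s.Nonempty ∧ g = ∑ j ∈ s, a j}

/-- `a` is a `(𝒴, m)`-witness for the adequacy of `A`: for each `(X, Y) ∈ 𝒴`,
`FS(a) ⊆ A ∩ FS(Y)` and there is an `m`-witness `y` for the suitability of `Y` such that
for all distinct `j, k`, `y j ∈ Y-supp(a j)` and `y j ∉ Y-supp(a k)`. -/
def AdequateWitness (𝒴 : Set (Set BoolGrp × Set BoolGrp)) (A : Set BoolGrp)
    {m : ℕ} (a : Fin m → BoolGrp) : Prop :=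
  ∀ XY ∈ 𝒴, FSfin a ⊆ A ∩ FSset XY.2 ∧
    ∃ y : Fin m → BoolGrp, SuitWitness XY.1 XY.2 y ∧
      ∀ j k : Fin m, j ≠ k → y j ∈ Xsupp XY.2 (a j) ∧ y j ∉ Xsupp XY.2 (a k)

/-- `A` is `(𝒴, m)`-adequate if there is a `(𝒴, m)`-witness for its adequacy. -/
def Adequate (𝒴 : Set (Set BoolGrp × Set BoolGrp)) (m : ℕ) (A : Set BoolGrp) : Prop :=
  ∃ a : Fin m → BoolGrp, AdequateWitness 𝒴 A a

/-- `A` is `𝒳`-adequate if it is `(𝒴, m)`-adequate for every finite `𝒴 ⊆ 𝒳` and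
every `m`. -/
def XAdequate (𝒳 : Set (Set BoolGrp × Set BoolGrp)) (A : Set BoolGrp) : Prop :=
  ∀ 𝒴 ⊆ 𝒳, 𝒴.Finite → ∀ m : ℕ, Adequate 𝒴 m A

/-- A family of pairs `(X, Y)` with each `X` linearly independent and each `Y` suitable
for `X`. -/
def GoodFamily (𝒳 : Set (Set BoolGrp × Set BoolGrp)) : Prop :=
  ∀ XY ∈ 𝒳, LinearIndependent (ZMod 2) ((↑) : XY.1 → BoolGrp) ∧ Suitable XY.1 XY.2

/-!
Suppose the cells fail at finite `𝒴₀ ⊆ 𝒳`, length `m₀`, and `𝒴₁ ⊆ 𝒳`, length `m₁`; put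
`𝒴 = 𝒴₀ ∪ 𝒴₁`, `m = max m₀ m₁`. Folkman's theorem gives `M` such that every 2-colouring of the
subsets of `Fin M` admits `m` disjoint nonempty blocks all of whose unions have one colour. Colour
`s` by whether `∑ i ∈ s, a i ∈ A₀`, for a `(𝒴, M)`-witness `a` for `A₀ ∪ A₁`: the block sums are
then a `(𝒴, m)`-witness for one of the cells. They keep the separation property because condition
(ii) of suitability, applied with `y = y'`, yields for each `y₀ ∈ Y` a linear functional on `𝔹`
that is `1` at `y₀` and `0` on the rest of `Y`, and such a functional reads off `Y`-supports.
-/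

open Finset Function

theorem Hindman.exists_finset_sum_eq_of_mem_FS {M : Type*} [AddCommMonoid M] {a : Stream' M}
    {x : M} (hx : x ∈ Hindman.FS a) : ∃ s : Finset ℕ, s.Nonempty ∧ x = ∑ i ∈ s, a.get i := by
  induction hx with
  | head' a => exact ⟨{0}, singleton_nonempty 0, by simp [Stream'.head]⟩
  | tail' a m _ ih =>
    obtain ⟨s, hs, rfl⟩ := ih
    exact ⟨s.map (addRightEmbedding 1), hs.map, by simp [Stream'.get_tail]⟩
  | cons' a m _ ih =>
    obtain ⟨s, hs, rfl⟩ := ih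
    refine ⟨insert 0 (s.map (addRightEmbedding 1)), insert_nonempty _ _, ?_⟩
    rw [sum_insert (by simp), sum_map]
    simp [Stream'.get_tail, Stream'.head]

/-- Folkman's theorem, infinite form. Apply Hindman's theorem in `Multiset ℕ` to the stream of
singletons: a sum of multisets is duplicate-free exactly when the summands are disjoint, so
colouring only the duplicate-free sums forces the Hindman sequence to consist of disjoint sets. -/
theorem exists_mono_biUnion {κ : Type*} [Finite κ] (c : Finset ℕ → κ) :
    ∃ t : ℕ → Finset ℕ, (∀ n, (t n).Nonempty) ∧ Pairwise (Disjoint on t) ∧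
      ∃ v, ∀ w : Finset ℕ, w.Nonempty → c (w.biUnion t) = v := by
  let cell : κ → Set (Multiset ℕ) := fun v => {x | x.Nodup ∧ x ≠ 0 ∧ c x.toFinset = v}
  have hcover : Hindman.FS (fun n => {n} : Stream' (Multiset ℕ)) ⊆ ⋃₀ Set.range cell := by
    intro x hx
    obtain ⟨s, hs, rfl⟩ := Hindman.exists_finset_sum_eq_of_mem_FS hx
    have hsum : ∑ i ∈ s, ({i} : Multiset ℕ) = s.val := sum_multiset_singleton s
    refine ⟨cell _, ⟨c s, rfl⟩, ?_⟩
    simp only [Stream'.get, hsum, cell, Set.mem_ofPred_eq]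
    exact ⟨s.nodup, fun h => hs.ne_empty (val_eq_zero.1 h), by rw [val_toFinset]⟩
  obtain ⟨_, ⟨v, rfl⟩, b, hb⟩ :=
    Hindman.FS_partition_regular _ (Set.range cell) (Set.finite_range cell) hcover
  have hdisj : ∀ i j, i < j → Disjoint (b.get i).toFinset (b.get j).toFinset := fun i j hij =>
    Multiset.disjoint_toFinset.2 (Multiset.nodup_add.1 (hb (Hindman.FS.add_two b i j hij)).1).2.2
  refine ⟨fun n => (b.get n).toFinset,
    fun n => Multiset.toFinset_nonempty.2 (hb (Hindman.FS.singleton b n)).2.1,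
    fun i j hij => hij.lt_or_gt.elim (hdisj i j) fun h => (hdisj j i h).symm, v, fun w hw => ?_⟩
  have hw := (hb (Hindman.FS.finsetSum b w hw)).2.2
  have hunion : (∑ n ∈ w, b.get n).toFinset = w.biUnion fun n => (b.get n).toFinset := by
    ext; simp [Multiset.mem_sum]
  rwa [hunion] at hw

/-- Folkman's theorem, by compactness: a colouring of each `Finset (Fin M)` without monochromatic
unions of `m` disjoint blocks would have a pointwise ultrafilter limit, contradicting the
infinite form. -/
theorem exists_fin_mono_biUnion {κ : Type*} [Finite κ] (m : ℕ) :
    ∃ M, ∀ c : Finset (Fin M) → κ, ∃ t : Fin m → Finset (Fin M), (∀ k, (t k).Nonempty) ∧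
      Pairwise (Disjoint on t) ∧ ∃ v, ∀ w : Finset (Fin m), w.Nonempty → c (w.biUnion t) = v := by
  by_contra! h
  choose C hC using h
  let restrict (M : ℕ) (s : Finset ℕ) : Finset (Fin M) := univ.filter fun i => ↑i ∈ s
  have hlim : ∀ s, ∃ v, ∀ᶠ M in Filter.hyperfilter ℕ, C M (restrict M s) = v := fun s =>
    Ultrafilter.eventually_exists_iff.1 (Filter.Eventually.of_forall fun M => ⟨_, rfl⟩)
  choose c hc using hlim
  obtain ⟨t, htne, htdisj, v, hv⟩ := exists_mono_biUnion c
  obtain ⟨N, hN⟩ := exists_nat_subset_range (univ.biUnion fun k : Fin m => t k)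
  have hlarge : ∀ᶠ M in Filter.hyperfilter ℕ, N ≤ M ∧
      ∀ w : Finset (Fin m), C M (restrict M ((w.image Fin.val).biUnion t)) =
        c ((w.image Fin.val).biUnion t) :=
    ((Filter.eventually_ge_atTop N).filter_mono
      (Filter.hyperfilter_le_cofinite.trans Nat.cofinite_eq_atTop.le)).and
      (Filter.eventually_all.2 fun w => hc _)
  obtain ⟨M, hNM, hM⟩ := hlarge.exists
  have hrestrict : ∀ w : Finset (Fin m),
      (w.biUnion fun k => restrict M (t k)) = restrict M ((w.image Fin.val).biUnion t) := by
    intro w; ext; simp [restrict]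
  have hne : ∀ k : Fin m, (restrict M (t k)).Nonempty := fun k => by
    obtain ⟨n, hn⟩ := htne k
    have hnN : n < N := mem_range.1 (hN (mem_biUnion.2 ⟨k, mem_univ _, hn⟩))
    exact ⟨⟨n, by omega⟩, by simpa [restrict] using hn⟩
  have hdisj : Pairwise (Disjoint on fun k : Fin m => restrict M (t k)) := fun k l hkl =>
    disjoint_left.2 fun i hik hil => by
      simp only [restrict, mem_filter] at hik hil
      exact disjoint_left.1 (htdisj (Fin.val_injective.ne hkl)) hik.2 hil.2
  obtain ⟨w, hw, hwv⟩ := hC M _ hne hdisj v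
  exact hwv (by rw [hrestrict, hM, hv _ (hw.image _)])

theorem LinearIndepOn.exists_dual_eq_ite {K V : Type*} [Field K] [AddCommGroup V] [Module K V]
    [DecidableEq V] {X : Set V} (hX : LinearIndepOn K id X) {x₀ : V} (hx₀ : x₀ ∈ X) :
    ∃ φ : V →ₗ[K] K, ∀ x ∈ X, φ x = if x = x₀ then 1 else 0 := by
  let B := Module.Basis.extend hX
  refine ⟨B.coord ⟨x₀, hX.subset_extend _ hx₀⟩, fun x hx => ?_⟩
  have hxB : B ⟨x, hX.subset_extend _ hx⟩ = x := Module.Basis.extend_apply_self hX _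
  rw [Module.Basis.coord_apply]
  conv_lhs => rw [← hxB]
  rw [B.repr_self, Finsupp.single_apply]
  by_cases h : x = x₀ <;> simp [h]

theorem map_sum_eq_ite_mem {R V : Type*} [CommSemiring R] [AddCommMonoid V] [Module R V]
    [DecidableEq V] (φ : V →ₗ[R] R) {X : Set V} {x₀ : V}
    (hφ : ∀ x ∈ X, φ x = if x = x₀ then 1 else 0) {S : Finset V} (hS : ↑S ⊆ X) : φ (∑ v ∈ S, v) = if x₀ ∈ S then 1 else 0 := by
  rw [map_sum, sum_congr rfl fun x hx => hφ x (hS hx), sum_ite_eq']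

theorem Xsupp_spec {X : Set BoolGrp} {y : BoolGrp} {S : Finset BoolGrp} (hS : ↑S ⊆ X)
    (hy : y = ∑ v ∈ S, v) : ↑(Xsupp X y) ⊆ X ∧ y = ∑ v ∈ Xsupp X y, v := by
  have h : ∃ S : Finset BoolGrp, ↑S ⊆ X ∧ y = ∑ v ∈ S, v := ⟨S, hS, hy⟩
  rw [Xsupp, dif_pos h]
  exact h.choose_spec

theorem Xsupp_eq_of_sum_eq {X : Set BoolGrp} (hX : LinearIndependent (ZMod 2) ((↑) : X → BoolGrp))
    {y : BoolGrp} {S : Finset BoolGrp} (hS : ↑S ⊆ X) (hy : y = ∑ v ∈ S, v) : Xsupp X y = S := by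
  obtain ⟨hsuppX, hsupp⟩ := Xsupp_spec hS hy
  ext x₀
  by_cases hx₀ : x₀ ∈ X
  · obtain ⟨φ, hφ⟩ := LinearIndepOn.exists_dual_eq_ite hX hx₀
    have h := (map_sum_eq_ite_mem φ hφ hsuppX).symm.trans
      ((congrArg φ (hsupp.symm.trans hy)).trans (map_sum_eq_ite_mem φ hφ hS))
    by_cases h₁ : x₀ ∈ Xsupp X y <;> by_cases h₂ : x₀ ∈ S <;> simp [h₁, h₂] at h ⊢
  · exact iff_of_false (fun h => hx₀ (hsuppX h)) fun h => hx₀ (hS h)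

theorem map_eq_ite_mem_Xsupp (φ : BoolGrp →ₗ[ZMod 2] ZMod 2) {X : Set BoolGrp} {x₀ : BoolGrp}
    (hφ : ∀ x ∈ X, φ x = if x = x₀ then 1 else 0) {y : BoolGrp} (hy : y ∈ FSset X) :
    φ y = if x₀ ∈ Xsupp X y then 1 else 0 := by
  obtain ⟨S, -, hS, hyS⟩ := hy
  obtain ⟨hsuppX, hsupp⟩ := Xsupp_spec hS hyS
  rw [← map_sum_eq_ite_mem φ hφ hsuppX, ← hsupp]

theorem mem_Xsupp_iff_map_eq_one (φ : BoolGrp →ₗ[ZMod 2] ZMod 2) {X : Set BoolGrp}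
    {x₀ : BoolGrp} (hφ : ∀ x ∈ X, φ x = if x = x₀ then 1 else 0) {y : BoolGrp}
    (hy : y ∈ FSset X) : x₀ ∈ Xsupp X y ↔ φ y = 1 := by
  rw [map_eq_ite_mem_Xsupp φ hφ hy]
  split_ifs <;> simp_all

/-- Condition (ii) of suitability with `y = y'` provides an `X`-coordinate private to `y₀`
within `Y`; the coordinate functional of that element separates `y₀` from the rest of `Y`. -/
theorem Suitable.exists_dual_eq_ite {X Y : Set BoolGrp}
    (hX : LinearIndependent (ZMod 2) ((↑) : X → BoolGrp)) (hY : Suitable X Y) {y₀ : BoolGrp}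
    (hy₀ : y₀ ∈ Y) : ∃ φ : BoolGrp →ₗ[ZMod 2] ZMod 2, ∀ y ∈ Y, φ y = if y = y₀ then 1 else 0 := by
  obtain ⟨S, hSne, hS, hyS⟩ := hY.1 hy₀
  have hsupp_ne : (Xsupp X y₀).Nonempty := by rwa [Xsupp_eq_of_sum_eq hX hS hyS]
  obtain ⟨x₀, hx₀, hpriv⟩ := hY.2.2 y₀ hy₀ y₀ hy₀ (by simpa using hsupp_ne)
  rw [Set.inter_self, Finset.mem_coe] at hx₀
  obtain ⟨φ, hφ⟩ := LinearIndepOn.exists_dual_eq_ite hX ((Xsupp_spec hS hyS).1 hx₀)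
  refine ⟨φ, fun y hy => ?_⟩
  rw [map_eq_ite_mem_Xsupp φ hφ (hY.1 hy)]
  by_cases hyy : y = y₀
  · simp [hyy, hx₀]
  · have hx₀y : x₀ ∉ Xsupp X y := fun h =>
      hpriv (Set.mem_biUnion (x := y) ⟨hy, by simpa using hyy⟩ h)
    simp [hyy, hx₀y]

theorem SuitWitness.comp_injective {X Y : Set BoolGrp} {m n : ℕ} {y : Fin m → BoolGrp}
    (hy : SuitWitness X Y y) {f : Fin n → Fin m} (hf : Injective f) : SuitWitness X Y (y ∘ f) := by
  refine ⟨fun i => hy.1 (f i), fun i j hij => ?_⟩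
  rcases (hf.ne hij.ne).lt_or_gt with h | h
  · exact hy.2 _ _ h
  · exact Set.inter_comm _ _ ▸ hy.2 _ _ h

theorem mem_FSfin {m : ℕ} (a : Fin m → BoolGrp) (i : Fin m) : a i ∈ FSfin a :=
  ⟨{i}, singleton_nonempty i, (sum_singleton a i).symm⟩

theorem FSfin_comp_subset {m n : ℕ} (a : Fin m → BoolGrp) {f : Fin n → Fin m} (hf : Injective f) :
    FSfin (a ∘ f) ⊆ FSfin a := by
  rintro _ ⟨s, hs, rfl⟩
  exact ⟨s.map ⟨f, hf⟩, hs.map, (sum_map s ⟨f, hf⟩ a).symm⟩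

theorem FSfin_blockSum_subset {m M : ℕ} (a : Fin M → BoolGrp) {t : Fin m → Finset (Fin M)}
    (htne : ∀ k, (t k).Nonempty) (htdisj : Pairwise (Disjoint on t)) :
    FSfin (fun k => ∑ i ∈ t k, a i) ⊆ FSfin a := by
  rintro _ ⟨w, ⟨k, hk⟩, rfl⟩
  obtain ⟨i, hi⟩ := htne k
  exact ⟨w.biUnion t, ⟨i, mem_biUnion.2 ⟨k, hk, hi⟩⟩,
    (sum_biUnion (htdisj.set_pairwise _)).symm⟩

theorem AdequateWitness.comp_injective {𝒴 : Set (Set BoolGrp × Set BoolGrp)} {A : Set BoolGrp}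
    {m n : ℕ} {a : Fin m → BoolGrp} (ha : AdequateWitness 𝒴 A a) {f : Fin n → Fin m}
    (hf : Injective f) : AdequateWitness 𝒴 A (a ∘ f) := fun XY hXY => by
  obtain ⟨hFS, y, hy, hsep⟩ := ha XY hXY
  exact ⟨(FSfin_comp_subset a hf).trans hFS, y ∘ f, hy.comp_injective hf,
    fun j k hjk => hsep _ _ (hf.ne hjk)⟩

theorem Adequate.mono {𝒴 𝒴' : Set (Set BoolGrp × Set BoolGrp)} {m m' : ℕ} {A : Set BoolGrp}
    (hA : Adequate 𝒴 m A) (h𝒴 : 𝒴' ⊆ 𝒴) (hm : m' ≤ m) : Adequate 𝒴' m' A := by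
  obtain ⟨a, ha⟩ := hA
  exact ⟨a ∘ Fin.castLE hm, fun XY hXY => ha.comp_injective (Fin.castLE_injective hm) XY (h𝒴 hXY)⟩

/-- For the block `t j` pick `r j ∈ t j`; the functional separating `y (r j)` within `Y` is the
indicator of `r j` on the `a i`, hence of `j` on the block sums. -/
theorem AdequateWitness.blockSum {𝒴 : Set (Set BoolGrp × Set BoolGrp)} (h𝒴 : GoodFamily 𝒴)
    {A A' : Set BoolGrp} {m M : ℕ} {a : Fin M → BoolGrp} (ha : AdequateWitness 𝒴 A a)
    {t : Fin m → Finset (Fin M)} (htne : ∀ k, (t k).Nonempty) (htdisj : Pairwise (Disjoint on t))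
    (hA' : A ∩ FSfin (fun k => ∑ i ∈ t k, a i) ⊆ A') :
    AdequateWitness 𝒴 A' (fun k => ∑ i ∈ t k, a i) := by
  have hsub := FSfin_blockSum_subset a htne htdisj
  choose r hr using htne
  have hr_inj : Injective r := fun k l hkl => by
    by_contra hne
    exact disjoint_left.1 (htdisj hne) (hr k) (hkl ▸ hr l)
  intro XY hXY
  obtain ⟨hX, hY⟩ := h𝒴 XY hXY
  obtain ⟨hFS, y, hy, hsep⟩ := ha XY hXY
  refine ⟨fun g hg => ⟨hA' ⟨(hFS (hsub hg)).1, hg⟩, (hFS (hsub hg)).2⟩,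
    y ∘ r, hy.comp_injective hr_inj, fun j k hjk => ?_⟩
  obtain ⟨φ, hφ⟩ := hY.exists_dual_eq_ite hX (hy.1 (r j))
  have hφa : ∀ i, φ (a i) = if i = r j then 1 else 0 := fun i => by
    rw [map_eq_ite_mem_Xsupp φ hφ (hFS (mem_FSfin a i)).2]
    by_cases hi : i = r j
    · rw [if_pos hi, if_pos (hi ▸ (hsep (r j) (r k) (hr_inj.ne hjk)).1)]
    · rw [if_neg hi, if_neg (hsep (r j) i (Ne.symm hi)).2]
  have hφb : ∀ l, φ (∑ i ∈ t l, a i) = if r j ∈ t l then 1 else 0 := fun l => by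
    rw [map_sum, sum_congr rfl fun i _ => hφa i, sum_ite_eq']
  have hbY : ∀ l, ∑ i ∈ t l, a i ∈ FSset XY.2 := fun l => (hFS (hsub (mem_FSfin _ l))).2
  simp only [comp_apply, mem_Xsupp_iff_map_eq_one φ hφ (hbY _), hφb, if_pos (hr j),
    if_neg (disjoint_left.1 (htdisj hjk) (hr j))]
  decide

theorem adequate_or_adequate_of_union {𝒴 : Set (Set BoolGrp × Set BoolGrp)} (h𝒴 : GoodFamily 𝒴)
    {A₀ A₁ : Set BoolGrp} (hA : ∀ M, Adequate 𝒴 M (A₀ ∪ A₁)) (m : ℕ) :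
    Adequate 𝒴 m A₀ ∨ Adequate 𝒴 m A₁ := by
  obtain ⟨M, hM⟩ := exists_fin_mono_biUnion (κ := Bool) m
  obtain ⟨a, ha⟩ := hA M
  obtain ⟨t, htne, htdisj, v, hv⟩ := hM fun s => decide (∑ i ∈ s, a i ∈ A₀)
  have hcolour : ∀ g ∈ FSfin (fun k => ∑ i ∈ t k, a i), decide (g ∈ A₀) = v := by
    rintro _ ⟨w, hw, rfl⟩
    rw [← sum_biUnion (htdisj.set_pairwise _), hv w hw]
  cases v
  · refine Or.inr ⟨_, ha.blockSum h𝒴 htne htdisj fun g ⟨hgA, hg⟩ => ?_⟩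
    exact hgA.resolve_left (of_decide_eq_false (hcolour g hg))
  · exact Or.inl ⟨_, ha.blockSum h𝒴 htne htdisj fun g ⟨_, hg⟩ => of_decide_eq_true (hcolour g hg)⟩

/-- If `𝒳` is a family of pairs `(X, Y)` with `X` linearly independent and `Y` suitable
for `X`, and an `𝒳`-adequate set is partitioned into two cells, then one of the cells is
`𝒳`-adequate. -/
theorem xAdequate_partition (𝒳 : Set (Set BoolGrp × Set BoolGrp))
    (hgood : GoodFamily 𝒳) (A A₀ A₁ : Set BoolGrp)
    (hA : XAdequate 𝒳 A) (hpart : A = A₀ ∪ A₁) :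
    XAdequate 𝒳 A₀ ∨ XAdequate 𝒳 A₁ := by
  subst hpart
  by_contra! ⟨h₀, h₁⟩
  simp only [XAdequate, not_forall] at h₀ h₁
  obtain ⟨𝒴₀, h𝒴₀, hfin₀, m₀, hm₀⟩ := h₀
  obtain ⟨𝒴₁, h𝒴₁, hfin₁, m₁, hm₁⟩ := h₁
  have h𝒴 : 𝒴₀ ∪ 𝒴₁ ⊆ 𝒳 := Set.union_subset h𝒴₀ h𝒴₁
  rcases adequate_or_adequate_of_union (fun XY hXY => hgood XY (h𝒴 hXY))
    (hA _ h𝒴 (hfin₀.union hfin₁)) (max m₀ m₁) with h | h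
  · exact hm₀ (h.mono Set.subset_union_left (le_max_left _ _))
  · exact hm₁ (h.mono Set.subset_union_right (le_max_right _ _))
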